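/- arXiv:1504.07658 — 8 statements merged into one kernel-verified Lean document; each statement's English description precedes it below -/
import Mathlib

section
/- Suppose Ŝ ≥ 0. Let P₁ = Q̂/2 − 3P̂²/16, Q₁ = P̂³/32 − P̂Q̂/8 + R̂/4, Δ = (Q₁/2)² + (P₁/3)³, and assume Δ ≥ 0. Define z₁ = ∛(−Q₁/2 + √Δ) + ∛(−Q₁/2 − √Δ) − P̂/4, using real cube roots and the real square root of Δ. Then h has a positive real root if and only if z₁ > 0 and h(z₁) ≤ 0. -/
noncomputable section

/-- Coefficient A = b₁+b₂−2a -/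
def cA (a b₁ b₂ : ℝ) : ℝ := b₁ + b₂ - 2*a
/-- Coefficient B = b₁b₂−2a(b₁+b₂)+a²+2 -/
def cB (a b₁ b₂ : ℝ) : ℝ := b₁*b₂ - 2*a*(b₁+b₂) + a^2 + 2
/-- Coefficient C = (a²+1)(b₁+b₂)−2ab₁b₂−2a -/
def cC (a b₁ b₂ : ℝ) : ℝ := (a^2+1)*(b₁+b₂) - 2*a*b₁*b₂ - 2*a
/-- Coefficient D = a²b₁b₂−a(b₁+b₂)+1 -/
def cD (a b₁ b₂ : ℝ) : ℝ := a^2*b₁*b₂ - a*(b₁+b₂) + 1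
/-- Coefficient E = c² -/
def cE (c : ℝ) : ℝ := c^2
/-- P̂ = A²−2B -/
def qP (a b₁ b₂ c : ℝ) : ℝ := (cA a b₁ b₂)^2 - 2*(cB a b₁ b₂)
/-- Q̂ = B²+2D−2AC−E² -/
def qQ (a b₁ b₂ c : ℝ) : ℝ :=
  (cB a b₁ b₂)^2 + 2*(cD a b₁ b₂) - 2*(cA a b₁ b₂)*(cC a b₁ b₂) - (cE c)^2
/-- R̂ = C²−2BD−E²(b₁²+b₂²) -/
def qR (a b₁ b₂ c : ℝ) : ℝ :=
  (cC a b₁ b₂)^2 - 2*(cB a b₁ b₂)*(cD a b₁ b₂) - (cE c)^2*(b₁^2+b₂^2)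
/-- Ŝ = D²−E²(b₁b₂)² -/
def qS (a b₁ b₂ c : ℝ) : ℝ := (cD a b₁ b₂)^2 - (cE c)^2*(b₁*b₂)^2
/-- Auxiliary quartic h(z) = z⁴+P̂z³+Q̂z²+R̂z+Ŝ -/
def hq (a b₁ b₂ c z : ℝ) : ℝ :=
  z^4 + qP a b₁ b₂ c * z^3 + qQ a b₁ b₂ c * z^2 + qR a b₁ b₂ c * z + qS a b₁ b₂ c
/-- Derivative h′(z) = 4z³+3P̂z²+2Q̂z+R̂ -/
def hq' (a b₁ b₂ c z : ℝ) : ℝ :=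
  4*z^3 + 3*qP a b₁ b₂ c * z^2 + 2*qQ a b₁ b₂ c * z + qR a b₁ b₂ c
/-- Characteristic function P(λ) = λ⁴+Aλ³+Bλ²+Cλ+D − E(λ+b₁)(λ+b₂)e^{−2λτ} -/
def charP (a b₁ b₂ c τ : ℝ) (z : ℂ) : ℂ :=
  z^4 + (cA a b₁ b₂ : ℂ)*z^3 + (cB a b₁ b₂ : ℂ)*z^2 + (cC a b₁ b₂ : ℂ)*z + (cD a b₁ b₂ : ℂ)
    - (cE c : ℂ) * (z + (b₁:ℂ)) * (z + (b₂:ℂ)) * Complex.exp (-(2*z*(τ:ℂ)))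

/-- Real cube root. -/
def cbrt (x : ℝ) : ℝ := Real.sign x * |x| ^ ((1:ℝ)/3)

/-!
Shifting z = v - P̂/4 turns h'(z)/4 into the depressed cubic v³ + P₁v + Q₁. For Δ ≥ 0,
Cardano's root u = α + β (with αβ = -P₁/3) satisfies 3u² + 4P₁ = 3(α - β)² ≥ 0, so the cubic
factors as v - u times a nonnegative quadratic: h decreases up to z₁ = u - P̂/4 and increases
afterwards, and h(z₁) is the minimum of h. If z₁ ≤ 0, h is nondecreasing on [0, ∞) from
h(0) = Ŝ ≥ 0, so a positive root would make the nonzero polynomial h vanish on an interval;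
if z₁ > 0 and h(z₁) ≤ 0, the intermediate value theorem on [z₁, ∞) gives a root.
-/

open Polynomial Set

namespace Polynomial

variable {p : ℝ[X]} {z₀ : ℝ} (hsign : ∀ z, 0 ≤ (z - z₀) * p.derivative.eval z)
include hsign

lemma monotoneOn_eval_Ici_of_sub_mul_derivative_nonneg : MonotoneOn p.eval (Ici z₀) := by
  refine monotoneOn_of_deriv_nonneg (convex_Ici z₀) p.continuousOn p.differentiableOn
    fun z hz => ?_
  rw [interior_Ici, mem_Ioi] at hz
  rw [Polynomial.deriv]
  exact nonneg_of_mul_nonneg_right (hsign z) (sub_pos.mpr hz)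

lemma antitoneOn_eval_Iic_of_sub_mul_derivative_nonneg : AntitoneOn p.eval (Iic z₀) := by
  refine antitoneOn_of_deriv_nonpos (convex_Iic z₀) p.continuousOn p.differentiableOn
    fun z hz => ?_
  rw [interior_Iic, mem_Iio] at hz
  rw [Polynomial.deriv]
  exact nonpos_of_mul_nonneg_right (hsign z) (sub_neg.mpr hz)

lemma eval_le_of_sub_mul_derivative_nonneg (z : ℝ) : p.eval z₀ ≤ p.eval z := by
  rcases le_total z₀ z with h | h
  · exact monotoneOn_eval_Ici_of_sub_mul_derivative_nonneg hsign self_mem_Ici h h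
  · exact antitoneOn_eval_Iic_of_sub_mul_derivative_nonneg hsign h self_mem_Iic h

theorem exists_pos_root_iff_of_sub_mul_derivative_nonneg (hdeg : 0 < p.degree)
    (hlead : 0 ≤ p.leadingCoeff) (h0 : 0 ≤ p.eval 0) :
    (∃ z, 0 < z ∧ p.eval z = 0) ↔ 0 < z₀ ∧ p.eval z₀ ≤ 0 := by
  constructor
  · rintro ⟨z, hz, hroot⟩
    refine ⟨?_, hroot ▸ eval_le_of_sub_mul_derivative_nonneg hsign z⟩
    by_contra! hz₀
    have hmono := monotoneOn_eval_Ici_of_sub_mul_derivative_nonneg hsign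
    have hvanish : Icc 0 z ⊆ {t | p.IsRoot t} := fun t ⟨ht0, htz⟩ => by
      have hle0 : p.eval 0 ≤ p.eval t := hmono hz₀ (hz₀.trans ht0) ht0
      have hlez : p.eval t ≤ p.eval z := hmono (hz₀.trans ht0) (hz₀.trans hz.le) htz
      exact le_antisymm (hroot ▸ hlez) (h0.trans hle0)
    have hp : p = 0 := p.eq_zero_of_infinite_isRoot ((Icc_infinite hz).mono hvanish)
    simp [hp] at hdeg
  · rintro ⟨hz₀, hmin⟩
    obtain ⟨z, hz, hroot⟩ := intermediate_value_Ici p.continuousOn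
      (p.tendsto_atTop_of_leadingCoeff_nonneg hdeg hlead) (mem_Ici.mpr hmin)
    exact ⟨z, hz₀.trans_le hz, hroot⟩

end Polynomial

lemma cbrt_pow_three (x : ℝ) : cbrt x ^ 3 = x := by
  have hroot : (|x| ^ ((1:ℝ) / 3)) ^ 3 = |x| := by
    rw [one_div]; exact_mod_cast Real.rpow_inv_natCast_pow (abs_nonneg x) three_ne_zero
  rw [cbrt, mul_pow, hroot]
  rcases lt_trichotomy x 0 with h | rfl | h
  · simp only [Real.sign_of_neg h, abs_of_neg h]
    ring
  · simp
  · simp [Real.sign_of_pos h, abs_of_pos h]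

def cardano (p q : ℝ) : ℝ :=
  cbrt (-q / 2 + √((q / 2) ^ 2 + (p / 3) ^ 3)) + cbrt (-q / 2 - √((q / 2) ^ 2 + (p / 3) ^ 3))

section Cardano

variable {p q : ℝ} (hΔ : 0 ≤ (q / 2) ^ 2 + (p / 3) ^ 3)
include hΔ

lemma cbrt_mul_cbrt_eq :
    cbrt (-q / 2 + √((q / 2) ^ 2 + (p / 3) ^ 3)) * cbrt (-q / 2 - √((q / 2) ^ 2 + (p / 3) ^ 3))
      = -(p / 3) := by
  refine (Odd.strictMono_pow (by decide : Odd 3)).injective ?_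
  simp only [mul_pow, cbrt_pow_three]
  linear_combination -Real.sq_sqrt hΔ

lemma cardano_pow_three_add : cardano p q ^ 3 + p * cardano p q + q = 0 := by
  have hαβ := cbrt_mul_cbrt_eq hΔ
  rw [cardano]
  set α := cbrt (-q / 2 + √((q / 2) ^ 2 + (p / 3) ^ 3))
  set β := cbrt (-q / 2 - √((q / 2) ^ 2 + (p / 3) ^ 3))
  linear_combination cbrt_pow_three (-q / 2 + √((q / 2) ^ 2 + (p / 3) ^ 3))
    + cbrt_pow_three (-q / 2 - √((q / 2) ^ 2 + (p / 3) ^ 3)) + 3 * (α + β) * hαβ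

lemma three_mul_cardano_sq_add_nonneg : 0 ≤ 3 * cardano p q ^ 2 + 4 * p := by
  have hαβ := cbrt_mul_cbrt_eq hΔ
  rw [cardano]
  set α := cbrt (-q / 2 + √((q / 2) ^ 2 + (p / 3) ^ 3))
  set β := cbrt (-q / 2 - √((q / 2) ^ 2 + (p / 3) ^ 3))
  linear_combination 3 * sq_nonneg (α - β) - 12 * hαβ

end Cardano

lemma sub_mul_depressed_cubic_nonneg {p q u : ℝ} (hu : u ^ 3 + p * u + q = 0)
    (hdisc : 0 ≤ 3 * u ^ 2 + 4 * p) (v : ℝ) : 0 ≤ (v - u) * (v ^ 3 + p * v + q) := by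
  have hfactor : (v - u) * (v ^ 3 + p * v + q)
      = (v - u) ^ 2 * ((v + u / 2) ^ 2 + (3 * u ^ 2 + 4 * p) / 4) := by
    linear_combination (v - u) * hu
  rw [hfactor]
  positivity

def quartic (P Q R S : ℝ) : ℝ[X] := X ^ 4 + (C P * X ^ 3 + C Q * X ^ 2 + C R * X + C S)

lemma degree_cubic_lt_four (a b c d : ℝ) :
    (C a * X ^ 3 + C b * X ^ 2 + C c * X + C d).degree < ((4 : ℕ) : WithBot ℕ) :=
  degree_cubic_le.trans_lt (WithBot.coe_lt_coe.mpr (by norm_num))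

lemma monic_quartic (P Q R S : ℝ) : (quartic P Q R S).Monic :=
  monic_X_pow_add (degree_cubic_lt_four P Q R S)

lemma degree_quartic (P Q R S : ℝ) : (quartic P Q R S).degree = 4 :=
  (degree_add_eq_left_of_degree_lt (by rw [degree_X_pow]; exact degree_cubic_lt_four P Q R S)).trans
    (degree_X_pow 4)

lemma eval_quartic (P Q R S z : ℝ) :
    (quartic P Q R S).eval z = z ^ 4 + P * z ^ 3 + Q * z ^ 2 + R * z + S := by
  simp only [quartic, eval_add, eval_pow, eval_X, eval_mul, eval_C]
  ring

lemma eval_derivative_quartic (P Q R S z : ℝ) :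
    (quartic P Q R S).derivative.eval z = 4 * z ^ 3 + 3 * P * z ^ 2 + 2 * Q * z + R := by
  simp only [quartic, derivative_add, derivative_X_pow, derivative_C_mul_X_pow, derivative_C_mul_X,
    derivative_C, eval_add, eval_mul, eval_C, eval_pow, eval_X, eval_zero]
  ring

theorem quartic_exists_pos_root_iff {P Q R S P₁ Q₁ : ℝ} (hS : 0 ≤ S)
    (hP₁ : P₁ = Q / 2 - 3 * P ^ 2 / 16) (hQ₁ : Q₁ = P ^ 3 / 32 - P * Q / 8 + R / 4)
    (hΔ : 0 ≤ (Q₁ / 2) ^ 2 + (P₁ / 3) ^ 3) :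
    (∃ z, 0 < z ∧ (quartic P Q R S).eval z = 0) ↔
      0 < cardano P₁ Q₁ - P / 4 ∧ (quartic P Q R S).eval (cardano P₁ Q₁ - P / 4) ≤ 0 := by
  refine exists_pos_root_iff_of_sub_mul_derivative_nonneg (fun z => ?_)
    (by rw [degree_quartic]; decide) ((monic_quartic P Q R S).leadingCoeff ▸ zero_le_one)
    (by simpa [eval_quartic] using hS)
  have hcubic := sub_mul_depressed_cubic_nonneg (cardano_pow_three_add hΔ)
    (three_mul_cardano_sq_add_nonneg hΔ) (z + P / 4)
  rw [eval_derivative_quartic]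
  subst hP₁ hQ₁
  linear_combination 4 * hcubic

theorem stmt_1_general (a b₁ b₂ c : ℝ)
    (hS0 : 0 ≤ qS a b₁ b₂ c)
    (P₁ Q₁ Δ z₁ : ℝ)
    (hP₁ : P₁ = qQ a b₁ b₂ c / 2 - 3 * (qP a b₁ b₂ c)^2 / 16)
    (hQ₁ : Q₁ = (qP a b₁ b₂ c)^3 / 32 - qP a b₁ b₂ c * qQ a b₁ b₂ c / 8 + qR a b₁ b₂ c / 4)
    (hΔ : Δ = (Q₁/2)^2 + (P₁/3)^3) (hΔ0 : 0 ≤ Δ)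
    (hz₁ : z₁ = cbrt (-Q₁/2 + Real.sqrt Δ) + cbrt (-Q₁/2 - Real.sqrt Δ) - qP a b₁ b₂ c / 4) :
    (∃ z : ℝ, 0 < z ∧ hq a b₁ b₂ c z = 0) ↔ (0 < z₁ ∧ hq a b₁ b₂ c z₁ ≤ 0) := by
  subst hΔ hz₁
  simpa only [hq, cardano, ← eval_quartic] using quartic_exists_pos_root_iff hS0 hP₁ hQ₁ hΔ0

theorem stmt_1 (a b₁ b₂ c : ℝ) (ha : 0 < a) (hb₁ : 0 < b₁) (hb₂ : 0 < b₂)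
    (hS0 : 0 ≤ qS a b₁ b₂ c)
    (P₁ Q₁ Δ z₁ : ℝ)
    (hP₁ : P₁ = qQ a b₁ b₂ c / 2 - 3 * (qP a b₁ b₂ c)^2 / 16)
    (hQ₁ : Q₁ = (qP a b₁ b₂ c)^3 / 32 - qP a b₁ b₂ c * qQ a b₁ b₂ c / 8 + qR a b₁ b₂ c / 4)
    (hΔ : Δ = (Q₁/2)^2 + (P₁/3)^3) (hΔ0 : 0 ≤ Δ)
    (hz₁ : z₁ = cbrt (-Q₁/2 + Real.sqrt Δ) + cbrt (-Q₁/2 - Real.sqrt Δ) - qP a b₁ b₂ c / 4) :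
    (∃ z : ℝ, 0 < z ∧ hq a b₁ b₂ c z = 0) ↔ (0 < z₁ ∧ hq a b₁ b₂ c z₁ ≤ 0) :=
  stmt_1_general a b₁ b₂ c hS0 P₁ Q₁ Δ z₁ hP₁ hQ₁ hΔ hΔ0 hz₁
end
end

section
/- If ω ∈ ℝ and τ ≥ 0 satisfy P(iω) = 0, then z = ω² is a root of the auxiliary quartic: ω⁸ + P̂ω⁶ + Q̂ω⁴ + R̂ω² + Ŝ = 0. -/
noncomputable section

theorem stmt_4 (a b₁ b₂ c τ : ℝ) (ha : 0 < a) (hb₁ : 0 < b₁) (hb₂ : 0 < b₂)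
    (hτ : 0 ≤ τ) (ω : ℝ)
    (hroot : charP a b₁ b₂ c τ (Complex.I * (ω:ℂ)) = 0) :
    ω^8 + qP a b₁ b₂ c * ω^6 + qQ a b₁ b₂ c * ω^4 + qR a b₁ b₂ c * ω^2 + qS a b₁ b₂ c = 0 := by

  set A := cA a b₁ b₂ with hA
  set B := cB a b₁ b₂ with hB
  set C := cC a b₁ b₂ with hC
  set D := cD a b₁ b₂ with hD
  set E := cE c with hE
  have heq : ((ω^4 - B*ω^2 + D : ℝ) : ℂ) + ((C*ω - A*ω^3 : ℝ):ℂ)*Complex.I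
      = (E:ℂ) * ((Complex.I*(ω:ℂ)) + (b₁:ℂ)) * ((Complex.I*(ω:ℂ)) + (b₂:ℂ))
          * Complex.exp (-(2*(Complex.I*(ω:ℂ))*(τ:ℂ))) := by
    have h := hroot
    unfold charP at h
    push_cast
    linear_combination h - ((ω:ℂ)^2*(B:ℂ) + (ω:ℂ)^3*(A:ℂ)*Complex.I + (ω:ℂ)^4*(Complex.I^2-1)) * Complex.I_sq
  have hsq := congrArg Complex.normSq heq
  rw [Complex.normSq_add_mul_I] at hsq
  have habs : Complex.normSq (Complex.exp (-(2*(Complex.I*(ω:ℂ))*(τ:ℂ)))) = 1 := by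
    rw [Complex.normSq_eq_norm_sq, Complex.norm_exp]
    simp
  have h1 : Complex.normSq ((Complex.I*(ω:ℂ)) + (b₁:ℂ)) = ω^2 + b₁^2 := by
    rw [Complex.normSq_apply]; simp; ring
  have h2 : Complex.normSq ((Complex.I*(ω:ℂ)) + (b₂:ℂ)) = ω^2 + b₂^2 := by
    rw [Complex.normSq_apply]; simp; ring
  rw [map_mul, map_mul, map_mul, habs, h1, h2, Complex.normSq_ofReal] at hsq
  simp only [hA, hB, hC, hD, hE, qP, qQ, qR, qS] at *
  linear_combination hsq
end
end

section
/- Assume c ≠ 0. For every real ω > 0, one has h(ω²) = 0 if and only if a*(ω)² + b*(ω)² = 1. -/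
noncomputable section

/-- Denominator N(ω) = E[(b₁+b₂)²ω² + (ω²−b₁b₂)²] -/
def Nden (a b₁ b₂ c ω : ℝ) : ℝ := cE c * ((b₁+b₂)^2*ω^2 + (ω^2 - b₁*b₂)^2)
/-- a*(ω) -/
def astar (a b₁ b₂ c ω : ℝ) : ℝ :=
  ((ω^4 - cB a b₁ b₂ * ω^2 + cD a b₁ b₂)*(b₁+b₂)*ω
    + (cA a b₁ b₂ * ω^3 - cC a b₁ b₂ * ω)*(b₁*b₂ - ω^2)) / Nden a b₁ b₂ c ω
/-- b*(ω) -/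
def bstar (a b₁ b₂ c ω : ℝ) : ℝ :=
  ((ω^4 - cB a b₁ b₂ * ω^2 + cD a b₁ b₂)*(b₁*b₂ - ω^2)
    + (-(cA a b₁ b₂) * ω^3 + cC a b₁ b₂ * ω)*(b₁+b₂)*ω) / Nden a b₁ b₂ c ω

theorem stmt_5 (a b₁ b₂ c : ℝ) (ha : 0 < a) (hb₁ : 0 < b₁) (hb₂ : 0 < b₂)
    (hc : c ≠ 0) (ω : ℝ) (hω : 0 < ω) :
    hq a b₁ b₂ c (ω^2) = 0 ↔ (astar a b₁ b₂ c ω)^2 + (bstar a b₁ b₂ c ω)^2 = 1 := by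

  have hS : (0:ℝ) < (b₁+b₂)^2*ω^2 + (ω^2 - b₁*b₂)^2 := by positivity
  have hE : (0:ℝ) < cE c := by
    have := hc; unfold cE; positivity
  have hN : Nden a b₁ b₂ c ω ≠ 0 := by
    unfold Nden; positivity
  have key : (astar a b₁ b₂ c ω)^2 + (bstar a b₁ b₂ c ω)^2
      = 1 + hq a b₁ b₂ c (ω^2) / ((cE c)^2 * ((b₁+b₂)^2*ω^2 + (ω^2 - b₁*b₂)^2)) := by
    unfold astar bstar hq Nden qP qQ qR qS cA cB cC cD cE at *
    field_simp
    ring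
  have hden : ((cE c)^2 * ((b₁+b₂)^2*ω^2 + (ω^2 - b₁*b₂)^2)) ≠ 0 := by positivity
  rw [key]
  constructor
  · intro h; rw [h]; simp
  · intro h
    have : hq a b₁ b₂ c (ω^2) / ((cE c)^2 * ((b₁+b₂)^2*ω^2 + (ω^2 - b₁*b₂)^2)) = 0 := by
      linarith
    exact (div_eq_zero_iff.mp this).resolve_right hden
end
end

section
/- Assume c ≠ 0, let ω > 0 satisfy h(ω²) = 0, and let j ∈ ℕ. Define τ^{(j)}(ω) = (arccos b*(ω) + 2jπ)/(2ω) if a*(ω) ≥ 0, and τ^{(j)}(ω) = (2π − arccos b*(ω) + 2jπ)/(2ω) if a*(ω) < 0. Then, with delay τ = τ^{(j)}(ω), both iω and −iω are roots of the characteristic function: P(iω) = P(−iω) = 0. -/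
noncomputable section

/-- The critical delays τ^{(j)}(ω). -/
def tauJ (a b₁ b₂ c ω : ℝ) (j : ℕ) : ℝ :=
  if 0 ≤ astar a b₁ b₂ c ω then
    (Real.arccos (bstar a b₁ b₂ c ω) + 2*j*Real.pi) / (2*ω)
  else
    (2*Real.pi - Real.arccos (bstar a b₁ b₂ c ω) + 2*j*Real.pi) / (2*ω)


/-!
Write `P(λ) = Q(λ) − R(λ) e^{−2λτ}` with `Q(λ) = λ⁴ + Aλ³ + Bλ² + Cλ + D` and
`R(λ) = E(λ + b₁)(λ + b₂)`. The numbers `a*`, `b*` are defined so that `Q(iω) = R(iω)(b* − i a*)`,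
and `h(ω²) = |Q(iω)|² − |R(iω)|²`, so at a root of `h` the point `(b*, a*)` lies on the unit
circle. The delay `τ⁽ʲ⁾` is chosen so that `2ωτ⁽ʲ⁾` is a polar angle of that point, i.e.
`e^{−2iωτ⁽ʲ⁾} = b* − i a*`, which makes `P(iω) = 0`. As `P` has real coefficients,
`P(−iω) = conj P(iω) = 0`.
-/

open Complex ComplexConjugate

theorem Nden_ne_zero {a b₁ b₂ c ω : ℝ} (hc : c ≠ 0) (hb : b₁ + b₂ ≠ 0) (hω : ω ≠ 0) :
    Nden a b₁ b₂ c ω ≠ 0 := by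
  unfold Nden cE
  have : 0 < (b₁ + b₂) ^ 2 * ω ^ 2 := by positivity
  have : 0 < (b₁ + b₂) ^ 2 * ω ^ 2 + (ω ^ 2 - b₁ * b₂) ^ 2 := by positivity
  positivity

theorem hq_sq_eq (a b₁ b₂ c ω : ℝ) :
    hq a b₁ b₂ c (ω ^ 2) =
      (ω^4 - cB a b₁ b₂ * ω^2 + cD a b₁ b₂) ^ 2 + (cA a b₁ b₂ * ω^3 - cC a b₁ b₂ * ω) ^ 2
        - cE c ^ 2 * ((b₁ + b₂) ^ 2 * ω ^ 2 + (ω ^ 2 - b₁ * b₂) ^ 2) := by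
  simp only [hq, qP, qQ, qR, qS]
  ring

theorem astar_sq_add_bstar_sq {a b₁ b₂ c ω : ℝ} (hN : Nden a b₁ b₂ c ω ≠ 0)
    (hroot : hq a b₁ b₂ c (ω ^ 2) = 0) :
    astar a b₁ b₂ c ω ^ 2 + bstar a b₁ b₂ c ω ^ 2 = 1 := by
  rw [hq_sq_eq] at hroot
  simp only [astar, bstar, div_pow, ← add_div]
  rw [div_eq_one_iff_eq (pow_ne_zero 2 hN)]
  simp only [Nden]
  linear_combination ((b₁ + b₂) ^ 2 * ω ^ 2 + (ω ^ 2 - b₁ * b₂) ^ 2) * hroot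

theorem quartic_I_mul_eq {a b₁ b₂ c ω : ℝ} (hN : Nden a b₁ b₂ c ω ≠ 0) :
    (I * ω) ^ 4 + cA a b₁ b₂ * (I * ω) ^ 3 + cB a b₁ b₂ * (I * ω) ^ 2 + cC a b₁ b₂ * (I * ω)
        + cD a b₁ b₂ =
      cE c * (I * ω + b₁) * (I * ω + b₂) * (bstar a b₁ b₂ c ω - I * astar a b₁ b₂ c ω) := by
  have hN' : (Nden a b₁ b₂ c ω : ℂ) ≠ 0 := by exact_mod_cast hN
  have hI3 : I ^ 3 = -I := by rw [pow_succ, I_sq, neg_one_mul]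
  simp only [astar, bstar]
  push_cast
  field_simp
  simp only [Nden]
  push_cast
  ring_nf
  simp only [I_sq, hI3, I_pow_four]
  ring

def polarAngle (x y : ℝ) : ℝ :=
  if 0 ≤ y then Real.arccos x else 2 * Real.pi - Real.arccos x

theorem cos_polarAngle {x : ℝ} (hx₁ : -1 ≤ x) (hx₂ : x ≤ 1) (y : ℝ) :
    Real.cos (polarAngle x y) = x := by
  unfold polarAngle
  split_ifs
  · exact Real.cos_arccos hx₁ hx₂
  · rw [Real.cos_two_pi_sub, Real.cos_arccos hx₁ hx₂]

theorem sin_polarAngle {x y : ℝ} (h : x ^ 2 + y ^ 2 = 1) : Real.sin (polarAngle x y) = y := by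
  have hsqrt : √(1 - x ^ 2) = |y| := by rw [← Real.sqrt_sq_eq_abs]; congr 1; linarith
  unfold polarAngle
  split_ifs with hy
  · rw [Real.sin_arccos, hsqrt, abs_of_nonneg hy]
  · rw [Real.sin_two_pi_sub, Real.sin_arccos, hsqrt, abs_of_neg (not_le.mp hy), neg_neg]

theorem two_mul_mul_tauJ {a b₁ b₂ c ω : ℝ} (hω : ω ≠ 0) (j : ℕ) :
    2 * ω * tauJ a b₁ b₂ c ω j = polarAngle (bstar a b₁ b₂ c ω) (astar a b₁ b₂ c ω)
      + (j : ℤ) * (2 * Real.pi) := by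
  unfold tauJ polarAngle
  split_ifs <;> field_simp <;> push_cast <;> ring

theorem cexp_neg_two_I_mul_tauJ {a b₁ b₂ c ω : ℝ} (hω : ω ≠ 0)
    (hunit : astar a b₁ b₂ c ω ^ 2 + bstar a b₁ b₂ c ω ^ 2 = 1) (j : ℕ) :
    exp (-(2 * (I * ω) * tauJ a b₁ b₂ c ω j)) = bstar a b₁ b₂ c ω - I * astar a b₁ b₂ c ω := by
  rw [show -(2 * (I * ω) * tauJ a b₁ b₂ c ω j) = ((-(2 * ω * tauJ a b₁ b₂ c ω j) : ℝ) : ℂ) * I by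
      push_cast; ring,
    exp_mul_I, ← ofReal_cos, ← ofReal_sin, Real.cos_neg, Real.sin_neg, two_mul_mul_tauJ hω,
    Real.cos_add_int_mul_two_pi, Real.sin_add_int_mul_two_pi,
    cos_polarAngle (by nlinarith) (by nlinarith), sin_polarAngle (by linarith)]
  push_cast
  ring

theorem charP_conj (a b₁ b₂ c τ : ℝ) (z : ℂ) :
    charP a b₁ b₂ c τ (conj z) = conj (charP a b₁ b₂ c τ z) := by
  simp only [charP, map_sub, map_add, map_mul, map_pow, map_neg, map_ofNat, conj_ofReal, ← exp_conj]

theorem stmt_6_general (a b₁ b₂ c : ℝ) (hb₁ : 0 < b₁) (hb₂ : 0 < b₂)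
    (hc : c ≠ 0) (ω : ℝ) (hω : 0 < ω)
    (hroot : hq a b₁ b₂ c (ω^2) = 0) (j : ℕ) :
    charP a b₁ b₂ c (tauJ a b₁ b₂ c ω j) (Complex.I * (ω:ℂ)) = 0 ∧
      charP a b₁ b₂ c (tauJ a b₁ b₂ c ω j) (-(Complex.I * (ω:ℂ))) = 0 := by
  have hN : Nden a b₁ b₂ c ω ≠ 0 := Nden_ne_zero hc (by positivity) hω.ne'
  have hroot_iω : charP a b₁ b₂ c (tauJ a b₁ b₂ c ω j) (I * ω) = 0 := by
    rw [charP, cexp_neg_two_I_mul_tauJ hω.ne' (astar_sq_add_bstar_sq hN hroot),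
      quartic_I_mul_eq hN, sub_self]
  have hconj : conj (I * ω) = -(I * ω) := by rw [map_mul, conj_I, conj_ofReal, neg_mul]
  exact ⟨hroot_iω, by rw [← hconj, charP_conj, hroot_iω, map_zero]⟩

theorem stmt_6 (a b₁ b₂ c : ℝ) (ha : 0 < a) (hb₁ : 0 < b₁) (hb₂ : 0 < b₂)
    (hc : c ≠ 0) (ω : ℝ) (hω : 0 < ω)
    (hroot : hq a b₁ b₂ c (ω^2) = 0) (j : ℕ) :
    charP a b₁ b₂ c (tauJ a b₁ b₂ c ω j) (Complex.I * (ω:ℂ)) = 0 ∧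
      charP a b₁ b₂ c (tauJ a b₁ b₂ c ω j) (-(Complex.I * (ω:ℂ))) = 0 :=
  stmt_6_general a b₁ b₂ c hb₁ hb₂ hc ω hω hroot j
end
end

section
/- Assume hypothesis (R-H): A > 0, A(B−E) > C−E(b₁+b₂), D > Eb₁b₂, and (C−E(b₁+b₂))·(A(B−E)−C+E(b₁+b₂)) > A²(D−Eb₁b₂). If the auxiliary quartic h has no positive real root, then for every delay τ ≥ 0, every complex root λ of the characteristic equation P(λ) = 0 satisfies Re λ < 0 (i.e., the trivial rest point is linearly stable for all delays). -/
noncomputable section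

/-!
Let `Q` be the quartic part of `P` and `N(λ) = E(λ+b₁)(λ+b₂)e^{−2λτ}` its delay term. On the
imaginary axis `h(y²) = |Q(iy)|² − |N(iy)|²`, so `h > 0` on `[0, ∞)` says `|N| < |Q|` there. Once
`Q` has no zero in the closed right half-plane, `N / Q` is holomorphic there, tends to `0` at
infinity and has modulus `< 1` on the boundary; by Phragmén–Lindelöf and the maximum modulus
principle `|N / Q| < 1` on the whole closed half-plane, whereas a root of `P` there has `N = Q`.

For the stability of `Q = (λ² + (b₁−a)λ + 1−ab₁)(λ² + (b₂−a)λ + 1−ab₂)`: the Routh–Hurwitz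
conditions make the third Hurwitz determinant of `Q − u(λ+b₁)(λ+b₂)` positive at `u = E`. If it were
not positive at `u = 0`, it would vanish at some `u ∈ [0, E)`, putting a root `i√s` of
`Q − u(λ+b₁)(λ+b₂)` on the axis and forcing `h(s) < 0`. Positivity at `u = 0` in turn forces all
coefficients of both quadratic factors to be positive.
-/

open Complex Filter Set Topology Bornology

/-- The third Hurwitz determinant of `X⁴ + α X³ + β X² + γ X + δ`. -/
def hurwitzDet (α β γ δ : ℝ) : ℝ := γ * (α * β - γ) - α ^ 2 * δ

lemma hurwitzDet_mul_quadratics (e₁ e₂ m₁ m₂ : ℝ) :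
    hurwitzDet (e₁ + e₂) (m₁ + m₂ + e₁ * e₂) (e₁ * m₂ + e₂ * m₁) (m₁ * m₂) =
      e₁ * e₂ * ((m₁ - m₂) ^ 2 + (e₁ + e₂) * (e₁ * m₂ + e₂ * m₁)) := by
  unfold hurwitzDet; ring

lemma pos_of_hurwitzDet_mul_quadratics_pos {e₁ e₂ m₁ m₂ : ℝ} (hA : 0 < e₁ + e₂)
    (hC : 0 < e₁ * m₂ + e₂ * m₁) (hD : 0 < m₁ * m₂)
    (hΔ : 0 < hurwitzDet (e₁ + e₂) (m₁ + m₂ + e₁ * e₂) (e₁ * m₂ + e₂ * m₁) (m₁ * m₂)) :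
    0 < e₁ ∧ 0 < e₂ ∧ 0 < m₁ ∧ 0 < m₂ := by
  rw [hurwitzDet_mul_quadratics] at hΔ
  have he : 0 < e₁ * e₂ := (pos_iff_pos_of_mul_pos hΔ).2 (by positivity)
  obtain ⟨he₁, he₂⟩ : 0 < e₁ ∧ 0 < e₂ := by
    rcases pos_and_pos_or_neg_and_neg_of_mul_pos he with h | h
    · exact h
    · linarith [h.1, h.2]
  refine ⟨he₁, he₂, ?_⟩
  rcases pos_and_pos_or_neg_and_neg_of_mul_pos hD with h | ⟨hm₁, hm₂⟩
  · exact h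
  · nlinarith [mul_neg_of_pos_of_neg he₁ hm₂, mul_neg_of_pos_of_neg he₂ hm₁]

/-- That is, `i √(γ / α)` is a root of `X⁴ + α X³ + β X² + γ X + δ`. -/
lemma sq_sub_mul_add_eq_zero_of_hurwitzDet_eq_zero {α β γ δ : ℝ} (hα : α ≠ 0)
    (h : hurwitzDet α β γ δ = 0) : (γ / α) ^ 2 - β * (γ / α) + δ = 0 := by
  unfold hurwitzDet at h
  field_simp
  linear_combination -h

lemma Continuous.pos_of_not_exists_pos_root {f : ℝ → ℝ} (hf : Continuous f) (h0 : 0 < f 0)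
    (hroot : ¬ ∃ z, 0 < z ∧ f z = 0) {s : ℝ} (hs : 0 ≤ s) : 0 < f s := by
  by_contra! hfs
  obtain ⟨r, ⟨hr0, -⟩, hr⟩ := intermediate_value_Icc' hs hf.continuousOn ⟨hfs, h0.le⟩
  rcases hr0.eq_or_lt with rfl | hr0
  · exact h0.ne' hr
  · exact hroot ⟨r, hr0, hr⟩

section Coefficients

variable (a b₁ b₂ c : ℝ)

lemma cA_eq : cA a b₁ b₂ = (b₁ - a) + (b₂ - a) := by unfold cA; ring
lemma cB_eq : cB a b₁ b₂ = (1 - a * b₁) + (1 - a * b₂) + (b₁ - a) * (b₂ - a) := by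
  unfold cB; ring
lemma cC_eq : cC a b₁ b₂ = (b₁ - a) * (1 - a * b₂) + (b₂ - a) * (1 - a * b₁) := by
  unfold cC; ring
lemma cD_eq : cD a b₁ b₂ = (1 - a * b₁) * (1 - a * b₂) := by unfold cD; ring

lemma hq_eq (s : ℝ) : hq a b₁ b₂ c s =
    (s ^ 2 - cB a b₁ b₂ * s + cD a b₁ b₂) ^ 2 + s * (cC a b₁ b₂ - cA a b₁ b₂ * s) ^ 2
      - cE c ^ 2 * ((s + b₁ ^ 2) * (s + b₂ ^ 2)) := by
  unfold hq qP qQ qR qS; ring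

end Coefficients

lemma hurwitzDet_pos_of_hq_pos {a b₁ b₂ c : ℝ} (hb : 0 ≤ b₁ + b₂) (hA : 0 < cA a b₁ b₂)
    (hγ : 0 < cC a b₁ b₂ - cE c * (b₁ + b₂))
    (hΔ : 0 < hurwitzDet (cA a b₁ b₂) (cB a b₁ b₂ - cE c) (cC a b₁ b₂ - cE c * (b₁ + b₂))
      (cD a b₁ b₂ - cE c * b₁ * b₂))
    (hq_pos : ∀ s, 0 < s → 0 < hq a b₁ b₂ c s) :
    0 < hurwitzDet (cA a b₁ b₂) (cB a b₁ b₂) (cC a b₁ b₂) (cD a b₁ b₂) := by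
  by_contra! h0
  -- the Hurwitz determinant of `Q(λ) − u (λ + b₁) (λ + b₂)`
  set F : ℝ → ℝ := fun u => hurwitzDet (cA a b₁ b₂) (cB a b₁ b₂ - u)
    (cC a b₁ b₂ - u * (b₁ + b₂)) (cD a b₁ b₂ - u * b₁ * b₂)
  have hE : 0 ≤ cE c := sq_nonneg c
  obtain ⟨u, ⟨hu0, huE⟩, hFu⟩ : ∃ u ∈ Ico 0 (cE c), F u = 0 :=
    intermediate_value_Ico hE (show Continuous F by unfold F hurwitzDet; fun_prop).continuousOn
      ⟨by simpa [F] using h0, hΔ⟩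
  have hγu : 0 < cC a b₁ b₂ - u * (b₁ + b₂) := by nlinarith
  set s := (cC a b₁ b₂ - u * (b₁ + b₂)) / cA a b₁ b₂
  have hs : 0 < s := div_pos hγu hA
  have hre := sq_sub_mul_add_eq_zero_of_hurwitzDet_eq_zero hA.ne' hFu
  have him : cC a b₁ b₂ - u * (b₁ + b₂) - cA a b₁ b₂ * s = 0 := by
    simp only [s]; field_simp; ring
  have hqs : hq a b₁ b₂ c s = (u ^ 2 - cE c ^ 2) * ((s + b₁ ^ 2) * (s + b₂ ^ 2)) := by
    rw [hq_eq]
    linear_combination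
      (s ^ 2 - cB a b₁ b₂ * s + cD a b₁ b₂ + u * (b₁ * b₂ - s)) * hre
        + s * (cC a b₁ b₂ - cA a b₁ b₂ * s + u * (b₁ + b₂)) * him
  have hu2 : u ^ 2 < cE c ^ 2 := pow_lt_pow_left₀ huE hu0 two_ne_zero
  have hneg : hq a b₁ b₂ c s < 0 := by
    rw [hqs]; exact mul_neg_of_neg_of_pos (by linarith) (by positivity)
  exact lt_asymm (hq_pos s hs) hneg

lemma quadratic_ne_zero_of_re_nonneg {e m : ℝ} (he : 0 < e) (hm : 0 < m) {z : ℂ}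
    (hz : 0 ≤ z.re) : z ^ 2 + e * z + m ≠ 0 := by
  intro h
  have hre : (z ^ 2 + e * z + m).re = 0 := by rw [h, zero_re]
  have him : (z ^ 2 + e * z + m).im = 0 := by rw [h, zero_im]
  simp only [add_re, add_im, mul_re, mul_im, pow_two, ofReal_re, ofReal_im] at hre him
  have hy : z.im = 0 := by
    have : z.im * (2 * z.re + e) = 0 := by linarith
    exact (mul_eq_zero.1 this).resolve_right (by linarith)
  rw [hy] at hre
  nlinarith

lemma tendsto_quadratic_div_quartic (A B C D b₁ b₂ : ℂ) :
    Tendsto (fun z => (z + b₁) * (z + b₂) / (z ^ 4 + A * z ^ 3 + B * z ^ 2 + C * z + D))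
      (cobounded ℂ) (𝓝 0) := by
  set g : ℂ → ℂ := fun t =>
    t ^ 2 * ((1 + b₁ * t) * (1 + b₂ * t)) / (1 + A * t + B * t ^ 2 + C * t ^ 3 + D * t ^ 4)
  have hg : Tendsto g (𝓝 0) (𝓝 0) := by
    have : ContinuousAt g 0 := by unfold g; fun_prop (disch := simp)
    simpa [g] using this.tendsto
  refine (hg.comp tendsto_inv₀_cobounded).congr' ?_
  filter_upwards [eventually_ne_cobounded 0] with z hz
  simp only [g, Function.comp]
  field_simp

lemma norm_lt_one_of_tendsto_zero_right_half_plane {f : ℂ → ℂ}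
    (hd : DifferentiableOn ℂ f {z | 0 ≤ z.re})
    (hlim : Tendsto f (cobounded ℂ ⊓ 𝓟 {z | 0 ≤ z.re}) (𝓝 0))
    (him : ∀ y : ℝ, ‖f (y * I)‖ < 1) {z : ℂ} (hz : 0 ≤ z.re) : ‖f z‖ < 1 := by
  have hreal : Tendsto (fun x : ℝ => f x) atTop (𝓝 0) :=
    hlim.comp <| tendsto_inf.2 ⟨RCLike.tendsto_ofReal_atTop_cobounded ℂ,
      tendsto_principal.2 <| (eventually_ge_atTop 0).mono fun x hx => by simpa using hx⟩
  have hopen_sub : {z : ℂ | 0 < z.re} ⊆ {z | 0 ≤ z.re} := fun _ hw => le_of_lt (α := ℝ) hw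
  have hbigO : f =O[cobounded ℂ ⊓ 𝓟 {z | 0 < z.re}] fun z => Real.exp (0 * ‖z‖ ^ (0 : ℝ)) :=
    ((hlim.mono_left <| inf_le_inf_left _ <| principal_mono.2 hopen_sub).isBigO_one ℝ).congr_right
      fun _ => by simp
  have hle : ∀ w : ℂ, 0 ≤ w.re → ‖f w‖ ≤ 1 := fun w hw =>
    PhragmenLindelof.right_half_plane_of_tendsto_zero_on_real
      (by apply DifferentiableOn.diffContOnCl; rwa [closure_setOfPred_lt_re])
      ⟨0, two_pos, 0, hbigO⟩ hreal (fun y => (him y).le) hw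
  rcases hz.eq_or_lt with hz0 | hz0
  · have : z = z.im * I := Complex.ext (by simp [← hz0]) (by simp)
    rw [this]; exact him z.im
  by_contra! h1
  have hconst := eqOn_of_isPreconnected_of_isMaxOn_norm
    (convex_halfSpace_re_gt 0).isPreconnected (isOpen_lt continuous_const continuous_re)
    (hd.mono hopen_sub) hz0 fun w hw => (hle w (le_of_lt hw)).trans h1
  have hfz : f z = 0 := tendsto_nhds_unique
    (tendsto_const_nhds.congr' <| (eventually_gt_atTop (0 : ℝ)).mono fun x hx =>
      (hconst (show 0 < (x : ℂ).re by simpa using hx)).symm) hreal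
  norm_num [hfz] at h1

section Characteristic

variable (a b₁ b₂ c τ : ℝ)

def charPoly (z : ℂ) : ℂ :=
  z ^ 4 + (cA a b₁ b₂ : ℂ) * z ^ 3 + (cB a b₁ b₂ : ℂ) * z ^ 2 + (cC a b₁ b₂ : ℂ) * z
    + (cD a b₁ b₂ : ℂ)

def delayTerm (z : ℂ) : ℂ :=
  (cE c : ℂ) * (z + (b₁ : ℂ)) * (z + (b₂ : ℂ)) * exp (-(2 * z * (τ : ℂ)))

lemma charP_eq_sub (z : ℂ) :
    charP a b₁ b₂ c τ z = charPoly a b₁ b₂ z - delayTerm b₁ b₂ c τ z :=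
  rfl

lemma charPoly_eq_mul (z : ℂ) : charPoly a b₁ b₂ z =
    (z ^ 2 + ((b₁ - a : ℝ) : ℂ) * z + ((1 - a * b₁ : ℝ) : ℂ)) *
      (z ^ 2 + ((b₂ - a : ℝ) : ℂ) * z + ((1 - a * b₂ : ℝ) : ℂ)) := by
  unfold charPoly cA cB cC cD; push_cast; ring

variable {a b₁ b₂ c τ}

lemma charPoly_ne_zero (h₁ : a < b₁) (h₂ : a < b₂) (h₁' : 0 < 1 - a * b₁) (h₂' : 0 < 1 - a * b₂)
    {z : ℂ} (hz : 0 ≤ z.re) : charPoly a b₁ b₂ z ≠ 0 := by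
  rw [charPoly_eq_mul]
  exact mul_ne_zero (quadratic_ne_zero_of_re_nonneg (sub_pos.2 h₁) h₁' hz)
    (quadratic_ne_zero_of_re_nonneg (sub_pos.2 h₂) h₂' hz)

lemma tendsto_delayTerm_div_charPoly (hτ : 0 ≤ τ) :
    Tendsto (fun z => delayTerm b₁ b₂ c τ z / charPoly a b₁ b₂ z)
      (cobounded ℂ ⊓ 𝓟 {z | 0 ≤ z.re}) (𝓝 0) := by
  have hr : Tendsto (fun z => ‖(cE c : ℂ)‖ * ‖(z + b₁) * (z + b₂) / charPoly a b₁ b₂ z‖)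
      (cobounded ℂ) (𝓝 0) := by
    simpa [charPoly] using ((tendsto_quadratic_div_quartic (cA a b₁ b₂) (cB a b₁ b₂) (cC a b₁ b₂)
      (cD a b₁ b₂) b₁ b₂).norm.const_mul ‖(cE c : ℂ)‖)
  refine squeeze_zero_norm' ?_ (hr.mono_left inf_le_left)
  filter_upwards [mem_inf_of_right (mem_principal_self _)] with z (hz : 0 ≤ z.re)
  have hexp : ‖exp (-(2 * z * (τ : ℂ)))‖ ≤ 1 := by
    rw [norm_exp, Real.exp_le_one_iff]
    simpa using mul_nonneg (mul_nonneg zero_le_two hz) hτ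
  calc ‖delayTerm b₁ b₂ c τ z / charPoly a b₁ b₂ z‖
      = ‖(cE c : ℂ)‖ * ‖(z + b₁) * (z + b₂) / charPoly a b₁ b₂ z‖
          * ‖exp (-(2 * z * (τ : ℂ)))‖ := by
        simp only [delayTerm, norm_div, norm_mul]; ring
    _ ≤ ‖(cE c : ℂ)‖ * ‖(z + b₁) * (z + b₂) / charPoly a b₁ b₂ z‖ :=
        mul_le_of_le_one_right (by positivity) hexp

lemma hq_sq_eq_norm_sq_sub (y : ℝ) : hq a b₁ b₂ c (y ^ 2) =
    ‖charPoly a b₁ b₂ (y * I)‖ ^ 2 - ‖delayTerm b₁ b₂ c τ (y * I)‖ ^ 2 := by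
  have hQ : charPoly a b₁ b₂ (y * I) = ((y ^ 2) ^ 2 - cB a b₁ b₂ * y ^ 2 + cD a b₁ b₂ : ℝ)
      + (y * (cC a b₁ b₂ - cA a b₁ b₂ * y ^ 2) : ℝ) * I := by
    unfold charPoly; push_cast
    linear_combination ((y : ℂ) ^ 4 * (I ^ 2 - 1) + (cA a b₁ b₂ : ℂ) * (y : ℂ) ^ 3 * I
      + (cB a b₁ b₂ : ℂ) * (y : ℂ) ^ 2) * I_sq
  have hN : ‖delayTerm b₁ b₂ c τ (y * I)‖ ^ 2 =
      cE c ^ 2 * ((y ^ 2 + b₁ ^ 2) * (y ^ 2 + b₂ ^ 2)) := by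
    have hexp : ‖exp (-(2 * (y * I) * (τ : ℂ)))‖ = 1 := by rw [norm_exp]; simp
    have hb (b : ℝ) : ‖(y : ℂ) * I + b‖ ^ 2 = y ^ 2 + b ^ 2 := by
      rw [add_comm, Complex.sq_norm, normSq_add_mul_I, add_comm]
    simp only [delayTerm, norm_mul, mul_pow, hexp, hb, norm_real, Real.norm_eq_abs, sq_abs]
    ring
  rw [hq_eq, hN, Complex.sq_norm, hQ, normSq_add_mul_I]
  ring

lemma norm_delayTerm_lt_norm_charPoly {y : ℝ} (h : 0 < hq a b₁ b₂ c (y ^ 2)) :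
    ‖delayTerm b₁ b₂ c τ (y * I)‖ < ‖charPoly a b₁ b₂ (y * I)‖ := by
  rw [hq_sq_eq_norm_sq_sub (τ := τ)] at h
  exact lt_of_pow_lt_pow_left₀ 2 (norm_nonneg _) (by linarith)

end Characteristic

theorem stmt_8_general (a b₁ b₂ c : ℝ) (hb₁ : 0 < b₁) (hb₂ : 0 < b₂)
    (RH1 : 0 < cA a b₁ b₂)
    (RH2 : cC a b₁ b₂ - cE c * (b₁+b₂) < cA a b₁ b₂ * (cB a b₁ b₂ - cE c))
    (RH3 : cE c * b₁ * b₂ < cD a b₁ b₂)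
    (RH4 : (cA a b₁ b₂)^2 * (cD a b₁ b₂ - cE c * b₁ * b₂) <
      (cC a b₁ b₂ - cE c * (b₁+b₂)) *
        (cA a b₁ b₂ * (cB a b₁ b₂ - cE c) - cC a b₁ b₂ + cE c * (b₁+b₂)))
    (hnoroot : ¬ ∃ z : ℝ, 0 < z ∧ hq a b₁ b₂ c z = 0) :
    ∀ τ : ℝ, 0 ≤ τ → ∀ z : ℂ, charP a b₁ b₂ c τ z = 0 → z.re < 0 := by
  intro τ hτ z hz
  by_contra! hre
  have hE : 0 ≤ cE c := sq_nonneg c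
  have hEb : 0 ≤ cE c * b₁ * b₂ := by positivity
  have hD : 0 < cD a b₁ b₂ := by linarith
  have hγ : 0 < cC a b₁ b₂ - cE c * (b₁ + b₂) := by
    by_contra! h
    nlinarith [mul_nonpos_of_nonpos_of_nonneg h (sub_nonneg.2 RH2.le), pow_pos RH1 2]
  have hC : 0 < cC a b₁ b₂ := by nlinarith
  have hq_cont : Continuous (hq a b₁ b₂ c) := by unfold hq; fun_prop
  have hq_pos (s : ℝ) (hs : 0 ≤ s) : 0 < hq a b₁ b₂ c s := by
    refine hq_cont.pos_of_not_exists_pos_root ?_ hnoroot hs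
    rw [hq_eq]
    nlinarith
  have hΔ := hurwitzDet_pos_of_hq_pos (by positivity) RH1 hγ (by unfold hurwitzDet; linarith)
    fun s hs => hq_pos s hs.le
  rw [cA_eq, cB_eq, cC_eq, cD_eq] at hΔ
  obtain ⟨he₁, he₂, hm₁, hm₂⟩ := pos_of_hurwitzDet_mul_quadratics_pos
    (cA_eq a b₁ b₂ ▸ RH1) (cC_eq a b₁ b₂ ▸ hC) (cD_eq a b₁ b₂ ▸ hD) hΔ
  have hQ {w : ℂ} (hw : 0 ≤ w.re) : charPoly a b₁ b₂ w ≠ 0 :=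
    charPoly_ne_zero (sub_pos.1 he₁) (sub_pos.1 he₂) hm₁ hm₂ hw
  have hlt := norm_lt_one_of_tendsto_zero_right_half_plane
    (f := fun w => delayTerm b₁ b₂ c τ w / charPoly a b₁ b₂ w)
    (fun w hw => (DifferentiableAt.div (by unfold delayTerm; fun_prop)
      (by unfold charPoly; fun_prop) (hQ hw)).differentiableWithinAt)
    (tendsto_delayTerm_div_charPoly hτ)
    (fun y => by
      rw [norm_div, div_lt_one (norm_pos_iff.2 (hQ (by simp)))]
      exact norm_delayTerm_lt_norm_charPoly (hq_pos _ (sq_nonneg y))) hre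
  rw [charP_eq_sub, sub_eq_zero] at hz
  simp [← hz, div_self (hQ hre)] at hlt

theorem stmt_8 (a b₁ b₂ c : ℝ) (ha : 0 < a) (hb₁ : 0 < b₁) (hb₂ : 0 < b₂)
    (RH1 : 0 < cA a b₁ b₂)
    (RH2 : cC a b₁ b₂ - cE c * (b₁+b₂) < cA a b₁ b₂ * (cB a b₁ b₂ - cE c))
    (RH3 : cE c * b₁ * b₂ < cD a b₁ b₂)
    (RH4 : (cA a b₁ b₂)^2 * (cD a b₁ b₂ - cE c * b₁ * b₂) <
      (cC a b₁ b₂ - cE c * (b₁+b₂)) *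
        (cA a b₁ b₂ * (cB a b₁ b₂ - cE c) - cC a b₁ b₂ + cE c * (b₁+b₂)))
    (hnoroot : ¬ ∃ z : ℝ, 0 < z ∧ hq a b₁ b₂ c z = 0) :
    ∀ τ : ℝ, 0 ≤ τ → ∀ z : ℂ, charP a b₁ b₂ c τ z = 0 → z.re < 0 :=
  stmt_8_general a b₁ b₂ c hb₁ hb₂ RH1 RH2 RH3 RH4 hnoroot
end
end

section
/- Assume c ≠ 0. If ω₀ > 0, τ₀ ≥ 0 satisfy P(iω₀) = 0 (with delay τ = τ₀) and h′(ω₀²) ≠ 0, then ∂P/∂λ evaluated at λ = iω₀ is nonzero; in particular iω₀ is a simple root of the characteristic function P. -/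
noncomputable section

/-! Write `P λ = Q λ - E R λ e^{-2λτ}` with `Q` the quartic and `R λ = (λ + b₁)(λ + b₂)`. If
`z = iω₀` were a double root, then `Q z = E R z w` and `Q' z = E (R' z - 2τ R z) w` with `|w| = 1`,
so `Q' z · conj (Q z) - E² R' z · conj (R z) = -2τE² |R z|²` is real. As the coefficients are real,
`conj z = -z` turns `2i` times the imaginary part of this quantity into the derivative at `z` of
`Q z Q (-z) - E² R z R (-z) = h (-z²)`, which is `-2z h' (ω₀²) ≠ 0`. -/

open Complex ComplexConjugate

section DelayedRoot

variable {q r : ℂ → ℂ} {q' r' : ℂ} {E τ : ℝ} {z : ℂ}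

theorem hasDerivAt_sub_mul_exp_delay (hq : HasDerivAt q q' z) (hr : HasDerivAt r r' z) :
    HasDerivAt (fun y => q y - E * r y * exp (-(2 * y * τ)))
      (q' - E * (r' - 2 * τ * r z) * exp (-(2 * z * τ))) z := by
  have hlin : HasDerivAt (fun y : ℂ => -(2 * y * τ)) (-(2 * τ)) z := by
    simpa using ((hasDerivAt_id' z).const_mul (2 : ℂ)).mul_const (τ : ℂ) |>.fun_neg
  exact (hq.sub ((hr.const_mul (E : ℂ)).mul hlin.cexp)).congr_deriv (by ring)

theorem mul_conj_sub_eq_of_delayed_root {w q₀ r₀ : ℂ} (hw : w * conj w = 1)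
    (hq : q₀ = E * r₀ * w) (hq' : q' = E * (r' - 2 * τ * r₀) * w) :
    q' * conj q₀ - q₀ * conj q' = E ^ 2 * (r' * conj r₀ - r₀ * conj r') := by
  rw [hq, hq']
  simp only [map_mul, map_sub, map_ofNat, conj_ofReal]
  linear_combination E ^ 2 * (r' * conj r₀ - r₀ * conj r') * hw

end DelayedRoot

theorem exp_mul_conj_of_re_eq_zero {z : ℂ} (hz : z.re = 0) : exp z * conj (exp z) = 1 := by
  rw [mul_conj, normSq_eq_norm_sq, norm_exp, hz, Real.exp_zero]
  norm_num

def charQuartic (a b₁ b₂ : ℝ) (z : ℂ) : ℂ :=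
  z ^ 4 + cA a b₁ b₂ * z ^ 3 + cB a b₁ b₂ * z ^ 2 + cC a b₁ b₂ * z + cD a b₁ b₂

def charQuartic' (a b₁ b₂ : ℝ) (z : ℂ) : ℂ :=
  4 * z ^ 3 + 3 * cA a b₁ b₂ * z ^ 2 + 2 * cB a b₁ b₂ * z + cC a b₁ b₂

def charDelay (b₁ b₂ : ℝ) (z : ℂ) : ℂ := (z + b₁) * (z + b₂)

def charDelay' (b₁ b₂ : ℝ) (z : ℂ) : ℂ := 2 * z + b₁ + b₂

section CharFunctions

variable (a b₁ b₂ c τ : ℝ) (z : ℂ)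

theorem charP_eq : charP a b₁ b₂ c τ =
    fun y => charQuartic a b₁ b₂ y - cE c * charDelay b₁ b₂ y * exp (-(2 * y * τ)) := by
  funext y
  simp only [charP, charQuartic, charDelay]
  ring

theorem hasDerivAt_charQuartic : HasDerivAt (charQuartic a b₁ b₂) (charQuartic' a b₁ b₂ z) z := by
  have h := ((((hasDerivAt_pow 4 z).add ((hasDerivAt_pow 3 z).const_mul (cA a b₁ b₂ : ℂ))).add
    ((hasDerivAt_pow 2 z).const_mul (cB a b₁ b₂ : ℂ))).add
    ((hasDerivAt_id z).const_mul (cC a b₁ b₂ : ℂ))).add_const (cD a b₁ b₂ : ℂ)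
  exact h.congr_deriv (by simp only [charQuartic']; push_cast; ring)

theorem hasDerivAt_charDelay : HasDerivAt (charDelay b₁ b₂) (charDelay' b₁ b₂ z) z :=
  (((hasDerivAt_id z).add_const (b₁ : ℂ)).mul ((hasDerivAt_id z).add_const (b₂ : ℂ))).congr_deriv
    (by simp only [charDelay', id]; ring)

theorem hasDerivAt_charP : HasDerivAt (charP a b₁ b₂ c τ)
    (charQuartic' a b₁ b₂ z -
      cE c * (charDelay' b₁ b₂ z - 2 * τ * charDelay b₁ b₂ z) * exp (-(2 * z * τ))) z := by
  rw [charP_eq]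
  exact hasDerivAt_sub_mul_exp_delay (hasDerivAt_charQuartic a b₁ b₂ z)
    (hasDerivAt_charDelay b₁ b₂ z)

theorem conj_charQuartic : conj (charQuartic a b₁ b₂ z) = charQuartic a b₁ b₂ (conj z) := by
  simp [charQuartic]

theorem conj_charQuartic' : conj (charQuartic' a b₁ b₂ z) = charQuartic' a b₁ b₂ (conj z) := by
  simp [charQuartic', map_ofNat]

theorem conj_charDelay : conj (charDelay b₁ b₂ z) = charDelay b₁ b₂ (conj z) := by
  simp [charDelay]

theorem conj_charDelay' : conj (charDelay' b₁ b₂ z) = charDelay' b₁ b₂ (conj z) := by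
  simp [charDelay', map_ofNat]

/-- With `F z = Q z Q (-z) - E² R z R (-z)` one has `F z = h (-z²)`; this is `F' z = -2 z h' (-z²)`. -/
theorem charQuartic'_mul_neg_sub_eq_neg_two_mul_hq' (x : ℝ) (hx : (x : ℂ) = -z ^ 2) :
    charQuartic' a b₁ b₂ z * charQuartic a b₁ b₂ (-z)
        - charQuartic a b₁ b₂ z * charQuartic' a b₁ b₂ (-z)
      - cE c ^ 2 * (charDelay' b₁ b₂ z * charDelay b₁ b₂ (-z)
        - charDelay b₁ b₂ z * charDelay' b₁ b₂ (-z))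
      = -2 * z * hq' a b₁ b₂ c x := by
  simp only [charQuartic, charQuartic', charDelay, charDelay', hq', qP, qQ, qR]
  push_cast
  rw [hx]
  ring

end CharFunctions

theorem stmt_10_general (a b₁ b₂ c : ℝ)
    (ω₀ τ₀ : ℝ) (hω₀ : 0 < ω₀)
    (hroot : charP a b₁ b₂ c τ₀ (Complex.I * (ω₀:ℂ)) = 0)
    (hder : hq' a b₁ b₂ c (ω₀^2) ≠ 0) :
    deriv (charP a b₁ b₂ c τ₀) (Complex.I * (ω₀:ℂ)) ≠ 0 := by
  intro hderiv
  set z : ℂ := I * ω₀ with hz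
  have hconj : conj z = -z := by simp [hz]
  have hw : exp (-(2 * z * τ₀)) * conj (exp (-(2 * z * τ₀))) = 1 :=
    exp_mul_conj_of_re_eq_zero (by simp [hz])
  rw [charP_eq] at hroot
  rw [(hasDerivAt_charP a b₁ b₂ c τ₀ z).deriv] at hderiv
  have hcross := mul_conj_sub_eq_of_delayed_root hw (sub_eq_zero.mp hroot) (sub_eq_zero.mp hderiv)
  rw [conj_charQuartic, conj_charQuartic', conj_charDelay, conj_charDelay', hconj] at hcross
  have hzero : -2 * z * hq' a b₁ b₂ c (ω₀ ^ 2) = 0 := by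
    have hω₀sq : ((ω₀ ^ 2 : ℝ) : ℂ) = -z ^ 2 := by push_cast; rw [hz, mul_pow, I_sq]; ring
    rw [← charQuartic'_mul_neg_sub_eq_neg_two_mul_hq' a b₁ b₂ c z _ hω₀sq]
    linear_combination hcross
  have hz0 : z ≠ 0 := mul_ne_zero I_ne_zero (ofReal_ne_zero.mpr hω₀.ne')
  simp [hz0, hder] at hzero

theorem stmt_10 (a b₁ b₂ c : ℝ) (ha : 0 < a) (hb₁ : 0 < b₁) (hb₂ : 0 < b₂)
    (hc : c ≠ 0) (ω₀ τ₀ : ℝ) (hω₀ : 0 < ω₀) (hτ₀ : 0 ≤ τ₀)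
    (hroot : charP a b₁ b₂ c τ₀ (Complex.I * (ω₀:ℂ)) = 0)
    (hder : hq' a b₁ b₂ c (ω₀^2) ≠ 0) :
    deriv (charP a b₁ b₂ c τ₀) (Complex.I * (ω₀:ℂ)) ≠ 0 :=
  stmt_10_general a b₁ b₂ c ω₀ τ₀ hω₀ hroot hder
end
end

section
/- Let a, b be real numbers with 0 < a < b. If (v, w) : ℝ → ℝ² is a differentiable solution of the single FitzHugh–Nagumo system v′(t) = −v(t)³ + a v(t) − w(t), w′(t) = v(t) − b w(t), and (v, w) is periodic with some period T > 0, then (v, w) is constant. In other words, the planar FitzHugh–Nagumo system has no nonconstant periodic solutions when a < b. -/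
/-!
Along solutions, `E(v, w) = (v - b w)² / 2 + (1 - a b) w² / 2 + b³ w⁴ / 4` satisfies
`E' = -(b - a + v² + b v w + b² w²) (v - b w)²`. The quadratic form `v² + b v w + b² w²` is positive
semidefinite, so for `a < b` the function `E` decreases along solutions. A periodic antitone
function is constant, hence `E' ≡ 0`, which forces `v = b w` on the orbit. Then `w' = v - b w = 0`,
so `w`, and with it `v = b w`, is constant.
-/

open Function

theorem Function.Periodic.apply_le_of_antitone {α β : Type*} [AddCommGroup α] [LinearOrder α]
    [IsOrderedAddMonoid α] [Archimedean α] [Preorder β] {f : α → β} {c : α}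
    (hf : Periodic f c) (hc : 0 < c) (hanti : Antitone f) (s t : α) : f s ≤ f t := by
  obtain ⟨n, hn⟩ := Archimedean.arch (t - s) hc
  calc f s = f (s + n • c) := (hf.nsmul n s).symm
    _ ≤ f t := hanti (sub_le_iff_le_add'.mp hn)

theorem Function.Periodic.eq_of_antitone {α β : Type*} [AddCommGroup α] [LinearOrder α]
    [IsOrderedAddMonoid α] [Archimedean α] [PartialOrder β] {f : α → β} {c : α}
    (hf : Periodic f c) (hc : 0 < c) (hanti : Antitone f) (s t : α) : f s = f t :=
  le_antisymm (hf.apply_le_of_antitone hc hanti s t) (hf.apply_le_of_antitone hc hanti t s)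

noncomputable def fitzHughNagumoEnergy (a b x y : ℝ) : ℝ :=
  (x - b * y) ^ 2 / 2 + (1 - a * b) * y ^ 2 / 2 + b ^ 3 * y ^ 4 / 4

section FitzHughNagumo

variable {a b : ℝ} {v w : ℝ → ℝ}

theorem hasDerivAt_fitzHughNagumoEnergy {t : ℝ}
    (hv : HasDerivAt v (-(v t) ^ 3 + a * v t - w t) t) (hw : HasDerivAt w (v t - b * w t) t) :
    HasDerivAt (fun t => fitzHughNagumoEnergy a b (v t) (w t))
      (-(b - a + (v t ^ 2 + b * v t * w t + b ^ 2 * w t ^ 2)) * (v t - b * w t) ^ 2) t := by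
  unfold fitzHughNagumoEnergy
  have hE := ((((hv.fun_sub (hw.const_mul b)).fun_pow 2).div_const 2).fun_add
    (((hw.fun_pow 2).const_mul (1 - a * b)).div_const 2)).fun_add
      (((hw.fun_pow 4).const_mul (b ^ 3)).div_const 4)
  refine hE.congr_deriv ?_
  push_cast
  ring

theorem sub_add_sq_add_mul_add_sq_pos (hab : a < b) (x y : ℝ) :
    0 < b - a + (x ^ 2 + b * x * y + b ^ 2 * y ^ 2) := by
  nlinarith [sq_nonneg (2 * x + b * y), sq_nonneg (b * y)]

theorem eq_mul_of_periodic_fitzHughNagumo (hab : a < b)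
    (hv : ∀ t, HasDerivAt v (-(v t) ^ 3 + a * v t - w t) t)
    (hw : ∀ t, HasDerivAt w (v t - b * w t) t)
    {T : ℝ} (hT : 0 < T) (hpv : Periodic v T) (hpw : Periodic w T) (t : ℝ) :
    v t = b * w t := by
  set E := fun t => fitzHughNagumoEnergy a b (v t) (w t)
  have hE t := hasDerivAt_fitzHughNagumoEnergy (hv t) (hw t)
  have hE_anti : Antitone E := by
    refine antitone_of_deriv_nonpos (fun t => (hE t).differentiableAt) fun t => ?_
    rw [(hE t).deriv, neg_mul]
    exact neg_nonpos.mpr (mul_nonneg (sub_add_sq_add_mul_add_sq_pos hab _ _).le (sq_nonneg _))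
  have hE_periodic : Periodic E T := fun t => by simp only [E, hpv t, hpw t]
  have hE_const : E = fun _ => E 0 := funext fun t => hE_periodic.eq_of_antitone hT hE_anti t 0
  have hE_deriv : deriv E t = 0 := by rw [hE_const, deriv_const]
  rwa [(hE t).deriv, neg_mul, neg_eq_zero,
    mul_eq_zero_iff_left (sub_add_sq_add_mul_add_sq_pos hab (v t) (w t)).ne', sq_eq_zero_iff,
    sub_eq_zero] at hE_deriv

end FitzHughNagumo

theorem stmt_15_general (a b : ℝ) (hab : a < b)
    (v w : ℝ → ℝ) (hv : Differentiable ℝ v) (hw : Differentiable ℝ w)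
    (heqv : ∀ t, deriv v t = -(v t)^3 + a * v t - w t)
    (heqw : ∀ t, deriv w t = v t - b * w t)
    (T : ℝ) (hT : 0 < T)
    (hpv : Function.Periodic v T) (hpw : Function.Periodic w T) :
    ∀ s t : ℝ, v s = v t ∧ w s = w t := by
  have hv_eq : ∀ t, v t = b * w t := eq_mul_of_periodic_fitzHughNagumo hab
    (fun t => heqv t ▸ (hv t).hasDerivAt) (fun t => heqw t ▸ (hw t).hasDerivAt) hT hpv hpw
  have hw_const : ∀ s t, w s = w t :=
    is_const_of_deriv_eq_zero hw fun t => by rw [heqw, hv_eq, sub_self]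
  intro s t
  exact ⟨by rw [hv_eq s, hv_eq t, hw_const s t], hw_const s t⟩

/-- the planar FitzHugh–Nagumo system has no nonconstant periodic
solutions when 0 < a < b. -/
theorem stmt_15 (a b : ℝ) (ha : 0 < a) (hab : a < b)
    (v w : ℝ → ℝ) (hv : Differentiable ℝ v) (hw : Differentiable ℝ w)
    (heqv : ∀ t, deriv v t = -(v t)^3 + a * v t - w t)
    (heqw : ∀ t, deriv w t = v t - b * w t)
    (T : ℝ) (hT : 0 < T)
    (hpv : Function.Periodic v T) (hpw : Function.Periodic w T) :
    ∀ s t : ℝ, v s = v t ∧ w s = w t :=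
  stmt_15_general a b hab v w hv hw heqv heqw T hT hpv hpw
end

section
/- If c²b₁b₂ > D, then for every delay τ ≥ 0 the characteristic function P has at least one real root λ > 0; consequently the trivial rest point of the delay-coupled FitzHugh–Nagumo system is linearly unstable for all delays. -/
noncomputable section

/-!
On the real axis `P` is real-valued, and `P(0) = D - c²b₁b₂ < 0`. For `x, τ ≥ 0` the delay factor
`exp (-2xτ)` lies in `(0, 1]`, so `P(x)` dominates a monic quartic and hence tends to `+∞`.
The intermediate value theorem gives a positive real root.
-/

open Filter

open Polynomial in
lemma tendsto_monic_quartic_atTop (p q r s : ℝ) :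
    Tendsto (fun x : ℝ => x^4 + p*x^3 + q*x^2 + r*x + s) atTop atTop := by
  let P : ℝ[X] := X^4 + C p * X^3 + C q * X^2 + C r * X + C s
  have hdeg : P.natDegree = 4 := by unfold P; compute_degree!
  have hmonic : P.Monic := by unfold P; monicity!
  have hP := P.tendsto_atTop_of_leadingCoeff_nonneg
    (by rw [degree_eq_natDegree hmonic.ne_zero, hdeg]; norm_num)
    (by rw [hmonic.leadingCoeff]; exact zero_le_one)
  simpa [P] using hP

def charPReal (a b₁ b₂ c τ x : ℝ) : ℝ :=
  x^4 + cA a b₁ b₂ * x^3 + cB a b₁ b₂ * x^2 + cC a b₁ b₂ * x + cD a b₁ b₂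
    - cE c * (x + b₁) * (x + b₂) * Real.exp (-(2*x*τ))

lemma charP_ofReal (a b₁ b₂ c τ x : ℝ) :
    charP a b₁ b₂ c τ x = charPReal a b₁ b₂ c τ x := by
  simp only [charP, charPReal]
  push_cast [Complex.ofReal_exp]
  ring_nf

lemma continuous_charPReal (a b₁ b₂ c τ : ℝ) : Continuous (charPReal a b₁ b₂ c τ) := by
  unfold charPReal
  fun_prop

lemma charPReal_zero (a b₁ b₂ c τ : ℝ) :
    charPReal a b₁ b₂ c τ 0 = cD a b₁ b₂ - c^2 * b₁ * b₂ := by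
  simp [charPReal, cE]

lemma quartic_le_charPReal (a c : ℝ) {b₁ b₂ τ x : ℝ} (hb₁ : 0 ≤ b₁) (hb₂ : 0 ≤ b₂)
    (hτ : 0 ≤ τ) (hx : 0 ≤ x) :
    x^4 + cA a b₁ b₂ * x^3 + (cB a b₁ b₂ - cE c) * x^2 + (cC a b₁ b₂ - cE c * (b₁ + b₂)) * x
      + (cD a b₁ b₂ - cE c * b₁ * b₂) ≤ charPReal a b₁ b₂ c τ x := by
  have hexp : Real.exp (-(2*x*τ)) ≤ 1 := Real.exp_le_one_iff.mpr (by nlinarith)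
  have hweight : 0 ≤ cE c * (x + b₁) * (x + b₂) := by unfold cE; positivity
  have := mul_le_mul_of_nonneg_left hexp hweight
  unfold charPReal
  nlinarith

lemma tendsto_charPReal_atTop (a c : ℝ) {b₁ b₂ τ : ℝ} (hb₁ : 0 ≤ b₁) (hb₂ : 0 ≤ b₂)
    (hτ : 0 ≤ τ) : Tendsto (charPReal a b₁ b₂ c τ) atTop atTop :=
  tendsto_atTop_mono' atTop
    ((eventually_ge_atTop 0).mono fun _ hx => quartic_le_charPReal a c hb₁ hb₂ hτ hx)
    (tendsto_monic_quartic_atTop _ _ _ _)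

theorem stmt_17_general (a b₁ b₂ c : ℝ) (hb₁ : 0 < b₁) (hb₂ : 0 < b₂)
    (hgt : cD a b₁ b₂ < c^2 * b₁ * b₂) :
    ∀ τ : ℝ, 0 ≤ τ → ∃ x : ℝ, 0 < x ∧ charP a b₁ b₂ c τ (x:ℂ) = 0 := by
  intro τ hτ
  have hneg : charPReal a b₁ b₂ c τ 0 < 0 := by rw [charPReal_zero]; linarith
  obtain ⟨x, hx, hroot⟩ := intermediate_value_Ioi (continuous_charPReal a b₁ b₂ c τ).continuousOn
    (tendsto_charPReal_atTop a c hb₁.le hb₂.le hτ) hneg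
  exact ⟨x, hx, by rw [charP_ofReal, hroot, Complex.ofReal_zero]⟩

theorem stmt_17 (a b₁ b₂ c : ℝ) (ha : 0 < a) (hb₁ : 0 < b₁) (hb₂ : 0 < b₂)
    (hgt : cD a b₁ b₂ < c^2 * b₁ * b₂) :
    ∀ τ : ℝ, 0 ≤ τ → ∃ x : ℝ, 0 < x ∧ charP a b₁ b₂ c τ (x:ℂ) = 0 :=
  stmt_17_general a b₁ b₂ c hb₁ hb₂ hgt
end
end
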